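/- arXiv:1404.5107 — 6 statements merged into one kernel-verified Lean document; each statement's English description precedes it below -/
import Mathlib

section
/- Let Γ be an lcsc group and let p : A → B and r : B → C be Γ-maps between Lebesgue Γ-spaces. If p and r are both relatively isometrically ergodic, then the composition r ∘ p : A → C is relatively isometrically ergodic. -/
open MeasureTheory Filter Topology
open scoped ENNReal

/-- A probability measure on a Borel `Γ`-space is *quasi-invariant* if every group element
pushes the measure to an equivalent one. -/
def QuasiInvariant (Γ : Type*) {X : Type*} [Group Γ] [MulAction Γ X]
    [MeasurableSpace X] (μ : Measure X) : Prop :=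
  ∀ g : Γ, Measure.map (fun x => g • x) μ ≪ μ ∧ μ ≪ Measure.map (fun x => g • x) μ

/-- A *fiber-wise isometric `Γ`-action* on a Borel map `q : 𝓜 → V`: a Borel metric on `q`
(a Borel function `d` on `𝓜 ×_V 𝓜` restricting to a separable metric on each fiber),
with compatible `Γ`-actions on `𝓜` and `V` acting isometrically between fibers. -/
structure FiberwiseIsometricAction (Γ : Type*) [Group Γ]
    (𝓜 V : Type*) [MeasurableSpace 𝓜] [MeasurableSpace V]
    [MulAction Γ 𝓜] [MulAction Γ V] where
  q : 𝓜 → V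
  measurable_q : Measurable q
  d : 𝓜 → 𝓜 → ℝ≥0∞
  measurable_d : Measurable fun p : 𝓜 × 𝓜 => d p.1 p.2
  equivariant_q : ∀ (g : Γ) (m : 𝓜), q (g • m) = g • q m
  d_self : ∀ m, d m m = 0
  eq_of_d_eq_zero : ∀ m m', q m = q m' → d m m' = 0 → m = m'
  d_comm : ∀ m m', d m m' = d m' m
  d_triangle : ∀ m₁ m₂ m₃, q m₁ = q m₂ → q m₂ = q m₃ →
    d m₁ m₃ ≤ d m₁ m₂ + d m₂ m₃
  d_lt_top : ∀ m m', q m = q m' → d m m' < ⊤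
  separable_fibers : ∀ v : V, ∃ D : Set 𝓜, D.Countable ∧ D ⊆ q ⁻¹' {v} ∧
    ∀ m, q m = v → ∀ ε : ℝ≥0∞, 0 < ε → ∃ m' ∈ D, d m m' < ε
  isometric_smul : ∀ (g : Γ) (m m' : 𝓜), q m = q m' → d (g • m) (g • m') = d m m'

/-- A `Γ`-map `p : A → B` between Lebesgue `Γ`-spaces is *relatively isometrically ergodic* if
for every fiber-wise isometric `Γ`-action on a Borel map `q : 𝓜 → V` between standard Borel
`Γ`-spaces, and all compatible `Γ`-maps `f : A → 𝓜`, `f₀ : B → V` (i.e. `q ∘ f = f₀ ∘ p` a.e.),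
there is a compatible `Γ`-map `f₁ : B → 𝓜` with `q ∘ f₁ = f₀` a.e. and `f₁ ∘ p = f` a.e. -/
def RelIsometricallyErgodic (Γ : Type*) [Group Γ] [MeasurableSpace Γ]
    {A B : Type*} [MeasurableSpace A] [MeasurableSpace B]
    [MulAction Γ A] [MulAction Γ B]
    (μ : Measure A) (ν : Measure B) (p : A → B) : Prop :=
  ∀ (𝓜 V : Type*) [MeasurableSpace 𝓜] [MeasurableSpace V]
    [StandardBorelSpace 𝓜] [StandardBorelSpace V]
    [MulAction Γ 𝓜] [MulAction Γ V] [MeasurableSMul Γ 𝓜] [MeasurableSMul Γ V]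
    (F : FiberwiseIsometricAction Γ 𝓜 V) (f : A → 𝓜) (f₀ : B → V),
    Measurable f → Measurable f₀ →
    (∀ g : Γ, ∀ᵐ a ∂μ, f (g • a) = g • f a) →
    (∀ g : Γ, ∀ᵐ b ∂ν, f₀ (g • b) = g • f₀ b) →
    (∀ᵐ a ∂μ, F.q (f a) = f₀ (p a)) →
    ∃ f₁ : B → 𝓜, Measurable f₁ ∧
      (∀ g : Γ, ∀ᵐ b ∂ν, f₁ (g • b) = g • f₁ b) ∧
      (∀ᵐ b ∂ν, F.q (f₁ b) = f₀ b) ∧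
      (∀ᵐ a ∂μ, f₁ (p a) = f a)

/-- A Lebesgue `Γ`-space `(X, μ)` is *isometrically ergodic* if for every separable metric
space `M` with an isometric `Γ`-action, every `Γ`-equivariant Borel map `X → M` is essentially
constant, its essential value being a `Γ`-fixed point. -/
def IsometricallyErgodic (Γ : Type*) [Group Γ] {X : Type*} [MeasurableSpace X]
    [MulAction Γ X] (μ : Measure X) : Prop :=
  ∀ (M : Type*) [MetricSpace M] [MeasurableSpace M] [BorelSpace M]
    [TopologicalSpace.SeparableSpace M] [MulAction Γ M],
    (∀ (g : Γ) (x y : M), dist (g • x) (g • y) = dist x y) →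
    ∀ f : X → M, Measurable f →
      (∀ g : Γ, ∀ᵐ x ∂μ, f (g • x) = g • f x) →
      ∃ m : M, (∀ g : Γ, g • m = m) ∧ ∀ᵐ x ∂μ, f x = m

/-!
If `q ∘ f = f₀ ∘ r ∘ p`, relative isometric ergodicity of `p` extends `f` through `p` to a
`Γ`-map `f₁ : B → 𝓜` over `f₀ ∘ r`, and that of `r` then extends `f₁` through `r` over `f₀`.
The one subtlety is that the hypotheses only speak about targets `𝓜`, `V` in fixed universes;
this is harmless because a standard Borel `Γ`-space has an equivariantly isomorphic copy
(`BorelCopy`) in every universe.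
-/

theorem MeasurableEquiv.standardBorelSpace {α β : Type*} [MeasurableSpace α]
    [MeasurableSpace β] [StandardBorelSpace β] (e : α ≃ᵐ β) : StandardBorelSpace α := by
  obtain ⟨τ, hτ, _⟩ := ‹StandardBorelSpace β›.polish
  let _ : TopologicalSpace α := τ.induced e
  have : PolishSpace α := e.toEquiv.polishSpace_induced
  refine ⟨⟨_, ⟨?_⟩, inferInstance⟩⟩
  rw [borel_comap, ← hτ.measurable_eq]
  exact e.measurableEmbedding.comap_eq.symm

def BorelCopy.{u, v} (X : Type v) [MeasurableSpace X] [StandardBorelSpace X] : Type u :=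
  ULift.{u} (Set.range (embeddingReal X))

namespace BorelCopy

variable (X : Type*) [MeasurableSpace X] [StandardBorelSpace X]

noncomputable instance : MeasurableSpace (BorelCopy X) :=
  inferInstanceAs (MeasurableSpace (ULift (Set.range (embeddingReal X))))

noncomputable def equiv : BorelCopy X ≃ᵐ X :=
  MeasurableEquiv.ulift.trans (measurableEmbedding_embeddingReal X).equivRange.symm

instance : StandardBorelSpace (BorelCopy X) :=
  haveI := (measurableEmbedding_embeddingReal X).measurableSet_range.standardBorel
  MeasurableEquiv.ulift.standardBorelSpace

variable {Γ : Type*} [Group Γ] [MulAction Γ X]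

noncomputable instance : MulAction Γ (BorelCopy X) := (equiv X).toEquiv.mulAction Γ

theorem equiv_smul (g : Γ) (x : BorelCopy X) : equiv X (g • x) = g • equiv X x :=
  (equiv X).apply_symm_apply _

instance [MeasurableSpace Γ] [MeasurableSMul Γ X] : MeasurableSMul Γ (BorelCopy X) where
  measurable_const_smul g :=
    (equiv X).symm.measurable.comp ((measurable_const_smul g).comp (equiv X).measurable)
  measurable_smul_const x := (equiv X).symm.measurable.comp (measurable_smul_const (equiv X x))

end BorelCopy

namespace FiberwiseIsometricAction

variable {Γ : Type*} [Group Γ] {𝓜 V 𝓜' V' : Type*} [MeasurableSpace 𝓜] [MeasurableSpace V]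
  [MeasurableSpace 𝓜'] [MeasurableSpace V'] [MulAction Γ 𝓜] [MulAction Γ V] [MulAction Γ 𝓜']
  [MulAction Γ V']

def comap (F : FiberwiseIsometricAction Γ 𝓜 V) (e : 𝓜' ≃ᵐ 𝓜) (e₀ : V' ≃ᵐ V)
    (he : ∀ (g : Γ) m, e (g • m) = g • e m) (he₀ : ∀ (g : Γ) v, e₀ (g • v) = g • e₀ v) :
    FiberwiseIsometricAction Γ 𝓜' V' where
  q m := e₀.symm (F.q (e m))
  measurable_q := e₀.symm.measurable.comp (F.measurable_q.comp e.measurable)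
  d m m' := F.d (e m) (e m')
  measurable_d := F.measurable_d.comp
    ((e.measurable.comp measurable_fst).prodMk (e.measurable.comp measurable_snd))
  equivariant_q g m := by
    rw [he, F.equivariant_q, e₀.symm_apply_eq, he₀, e₀.apply_symm_apply]
  d_self m := F.d_self _
  eq_of_d_eq_zero m m' hq hd := e.injective (F.eq_of_d_eq_zero _ _ (e₀.symm.injective hq) hd)
  d_comm m m' := F.d_comm _ _
  d_triangle m₁ m₂ m₃ h₁₂ h₂₃ :=
    F.d_triangle _ _ _ (e₀.symm.injective h₁₂) (e₀.symm.injective h₂₃)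
  d_lt_top m m' hq := F.d_lt_top _ _ (e₀.symm.injective hq)
  separable_fibers v := by
    obtain ⟨D, hD, hDv, hdense⟩ := F.separable_fibers (e₀ v)
    refine ⟨e ⁻¹' D, hD.preimage e.injective, fun m hm => ?_, fun m hm ε hε => ?_⟩
    · simpa [e₀.symm_apply_eq] using hDv hm
    · obtain ⟨m', hm'D, hm'⟩ := hdense (e m) (by rw [← hm, e₀.apply_symm_apply]) ε hε
      exact ⟨e.symm m', by simpa using hm'D, by simpa using hm'⟩
  isometric_smul g m m' hq := by
    simp only [he]
    exact F.isometric_smul g _ _ (e₀.symm.injective hq)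

@[simp]
theorem comap_q (F : FiberwiseIsometricAction Γ 𝓜 V) (e : 𝓜' ≃ᵐ 𝓜) (e₀ : V' ≃ᵐ V)
    (he : ∀ (g : Γ) m, e (g • m) = g • e m) (he₀ : ∀ (g : Γ) v, e₀ (g • v) = g • e₀ v)
    (m : 𝓜') : (F.comap e e₀ he he₀).q m = e₀.symm (F.q (e m)) :=
  rfl

end FiberwiseIsometricAction

section RelIsometricallyErgodicFor

variable {Γ : Type*} [Group Γ] {A B C : Type*} [MeasurableSpace A] [MeasurableSpace B]
  [MeasurableSpace C] [MulAction Γ A] [MulAction Γ B] [MulAction Γ C]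
  {𝓜 V : Type*} [MeasurableSpace 𝓜] [MeasurableSpace V] [MulAction Γ 𝓜] [MulAction Γ V]

/-- The defining property of `RelIsometricallyErgodic`, for one fiber-wise isometric action. -/
def RelIsometricallyErgodicFor (μ : Measure A) (ν : Measure B) (p : A → B)
    (F : FiberwiseIsometricAction Γ 𝓜 V) : Prop :=
  ∀ (f : A → 𝓜) (f₀ : B → V), Measurable f → Measurable f₀ →
    (∀ g : Γ, ∀ᵐ a ∂μ, f (g • a) = g • f a) →
    (∀ g : Γ, ∀ᵐ b ∂ν, f₀ (g • b) = g • f₀ b) →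
    (∀ᵐ a ∂μ, F.q (f a) = f₀ (p a)) →
    ∃ f₁ : B → 𝓜, Measurable f₁ ∧
      (∀ g : Γ, ∀ᵐ b ∂ν, f₁ (g • b) = g • f₁ b) ∧
      (∀ᵐ b ∂ν, F.q (f₁ b) = f₀ b) ∧
      (∀ᵐ a ∂μ, f₁ (p a) = f a)

theorem RelIsometricallyErgodicFor.of_comap {μ : Measure A} {ν : Measure B} {p : A → B}
    {F : FiberwiseIsometricAction Γ 𝓜 V} {𝓜' V' : Type*} [MeasurableSpace 𝓜']
    [MeasurableSpace V'] [MulAction Γ 𝓜'] [MulAction Γ V'] {e : 𝓜' ≃ᵐ 𝓜} {e₀ : V' ≃ᵐ V}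
    {he : ∀ (g : Γ) m, e (g • m) = g • e m} {he₀ : ∀ (g : Γ) v, e₀ (g • v) = g • e₀ v}
    (h : RelIsometricallyErgodicFor μ ν p (F.comap e e₀ he he₀)) :
    RelIsometricallyErgodicFor μ ν p F := by
  intro f f₀ hf hf₀ hfe hf₀e hq
  have he' : ∀ (g : Γ) m, e.symm (g • m) = g • e.symm m := fun g m => by
    rw [e.symm_apply_eq, he, e.apply_symm_apply]
  have he₀' : ∀ (g : Γ) v, e₀.symm (g • v) = g • e₀.symm v := fun g v => by
    rw [e₀.symm_apply_eq, he₀, e₀.apply_symm_apply]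
  obtain ⟨f₁, hf₁, hf₁e, hf₁q, hf₁p⟩ := h (e.symm ∘ f) (e₀.symm ∘ f₀)
    (e.symm.measurable.comp hf) (e₀.symm.measurable.comp hf₀)
    (fun g => by filter_upwards [hfe g] with a ha using by simp [ha, he'])
    (fun g => by filter_upwards [hf₀e g] with b hb using by simp [hb, he₀'])
    (by filter_upwards [hq] with a ha using by simp [ha])
  refine ⟨e ∘ f₁, e.measurable.comp hf₁, fun g => ?_, ?_, ?_⟩
  · filter_upwards [hf₁e g] with b hb using by simp [hb, he]
  · filter_upwards [hf₁q] with b hb using by simpa [e₀.symm_apply_eq] using hb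
  · filter_upwards [hf₁p] with a ha using by simp [ha]

theorem RelIsometricallyErgodic.relIsometricallyErgodicFor [MeasurableSpace Γ] {μ : Measure A}
    {ν : Measure B} {p : A → B} (h : RelIsometricallyErgodic Γ μ ν p) [StandardBorelSpace 𝓜]
    [StandardBorelSpace V] [MeasurableSMul Γ 𝓜] [MeasurableSMul Γ V]
    (F : FiberwiseIsometricAction Γ 𝓜 V) : RelIsometricallyErgodicFor μ ν p F :=
  RelIsometricallyErgodicFor.of_comap <| h (BorelCopy 𝓜) (BorelCopy V)
    (F.comap (BorelCopy.equiv 𝓜) (BorelCopy.equiv V) (BorelCopy.equiv_smul 𝓜)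
      (BorelCopy.equiv_smul V))

theorem RelIsometricallyErgodicFor.comp {μ : Measure A} {ν : Measure B} {κ : Measure C}
    {p : A → B} {r : B → C} {F : FiberwiseIsometricAction Γ 𝓜 V}
    (hpF : RelIsometricallyErgodicFor μ ν p F) (hrF : RelIsometricallyErgodicFor ν κ r F)
    (hp : Measure.QuasiMeasurePreserving p μ ν) (hr : Measure.QuasiMeasurePreserving r ν κ)
    (hre : ∀ g : Γ, ∀ᵐ b ∂ν, r (g • b) = g • r b) :
    RelIsometricallyErgodicFor μ κ (r ∘ p) F := by
  intro f f₀ hf hf₀ hfe hf₀e hq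
  have hf₀re : ∀ g : Γ, ∀ᵐ b ∂ν, f₀ (r (g • b)) = g • f₀ (r b) := fun g => by
    filter_upwards [hre g, hr.ae (hf₀e g)] with b hb hb'
    rw [hb, hb']
  obtain ⟨f₁, hf₁, hf₁e, hf₁q, hf₁p⟩ :=
    hpF f (f₀ ∘ r) hf (hf₀.comp hr.measurable) hfe hf₀re hq
  obtain ⟨f₂, hf₂, hf₂e, hf₂q, hf₂r⟩ := hrF f₁ f₀ hf₁ hf₀ hf₁e hf₀e hf₁q
  refine ⟨f₂, hf₂, hf₂e, hf₂q, ?_⟩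
  filter_upwards [hp.ae hf₂r, hf₁p] with a ha ha'
  exact ha.trans ha'

end RelIsometricallyErgodicFor

theorem relIsometricallyErgodic_comp_general
    {Γ : Type*} [Group Γ] [MeasurableSpace Γ]
    {A B C : Type*} [MeasurableSpace A] [MeasurableSpace B] [MeasurableSpace C]
    [MulAction Γ A] [MulAction Γ B] [MulAction Γ C]
    (μ : Measure A) (ν : Measure B) (κ : Measure C)
    (p : A → B) (hp : Measurable p)
    (hpm : μ.map p ≪ ν ∧ ν ≪ μ.map p)
    (r : B → C) (hr : Measurable r)
    (hre : ∀ g : Γ, ∀ᵐ b ∂ν, r (g • b) = g • r b)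
    (hrm : ν.map r ≪ κ ∧ κ ≪ ν.map r)
    (hpRIE : RelIsometricallyErgodic Γ μ ν p)
    (hrRIE : RelIsometricallyErgodic Γ ν κ r) :
    RelIsometricallyErgodic Γ μ κ (r ∘ p) := by
  intro 𝓜 V _ _ _ _ _ _ _ _ F
  exact (hpRIE.relIsometricallyErgodicFor F).comp (hrRIE.relIsometricallyErgodicFor F)
    ⟨hp, hpm.1⟩ ⟨hr, hrm.1⟩ hre

/-- For `Γ`-maps `p : A → B` and `r : B → C` between Lebesgue `Γ`-spaces over
an lcsc group `Γ`, if both `p` and `r` are relatively isometrically ergodic, then so is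
`r ∘ p : A → C`. -/
theorem relIsometricallyErgodic_comp
    {Γ : Type*} [Group Γ] [TopologicalSpace Γ] [IsTopologicalGroup Γ]
    [LocallyCompactSpace Γ] [SecondCountableTopology Γ]
    [MeasurableSpace Γ] [BorelSpace Γ]
    {A B C : Type*}
    [MeasurableSpace A] [StandardBorelSpace A]
    [MeasurableSpace B] [StandardBorelSpace B]
    [MeasurableSpace C] [StandardBorelSpace C]
    [MulAction Γ A] [MulAction Γ B] [MulAction Γ C]
    [MeasurableSMul Γ A] [MeasurableSMul Γ B] [MeasurableSMul Γ C]
    (μ : Measure A) (ν : Measure B) (κ : Measure C)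
    [IsProbabilityMeasure μ] [IsProbabilityMeasure ν] [IsProbabilityMeasure κ]
    (hμ : QuasiInvariant Γ μ) (hν : QuasiInvariant Γ ν) (hκ : QuasiInvariant Γ κ)
    (p : A → B) (hp : Measurable p)
    (hpe : ∀ g : Γ, ∀ᵐ a ∂μ, p (g • a) = g • p a)
    (hpm : μ.map p ≪ ν ∧ ν ≪ μ.map p)
    (r : B → C) (hr : Measurable r)
    (hre : ∀ g : Γ, ∀ᵐ b ∂ν, r (g • b) = g • r b)
    (hrm : ν.map r ≪ κ ∧ κ ≪ ν.map r)
    (hpRIE : RelIsometricallyErgodic Γ μ ν p)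
    (hrRIE : RelIsometricallyErgodic Γ ν κ r) :
    RelIsometricallyErgodic Γ μ κ (r ∘ p) :=
  relIsometricallyErgodic_comp_general μ ν κ p hp hpm r hr hre hrm hpRIE hrRIE
end

section
/- (Mautner phenomenon for isometric actions) Let P be a topological group acting continuously by isometries on a metric space (M,d), i.e. via a continuous homomorphism P → Is(M,d). Let x₀ ∈ M, let u ∈ P, and suppose there exists a sequence (aₙ) in P such that aₙ.x₀ = x₀ for all n and aₙ⁻¹ u aₙ → e in P. Then u.x₀ = x₀. -/
open Filter Topology

/-!
Conjugating by `aₙ` does not change how far `u` moves `x₀`: since `aₙ` is an isometry fixing `x₀`,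
`d(aₙ⁻¹ u aₙ · x₀, x₀) = d(u · x₀, x₀)`. By continuity of the action the left side tends to
`d(x₀, x₀) = 0`, so the constant `d(u · x₀, x₀)` vanishes.
-/

theorem dist_conj_smul_eq {P M : Type*} [Group P] [PseudoMetricSpace M] [MulAction P M]
    {g : P} (hg : ∀ x y : M, dist (g • x) (g • y) = dist x y) (u : P) (x : M) :
    dist ((g⁻¹ * u * g) • x) x = dist (u • g • x) (g • x) := by
  rw [← hg, mul_smul, mul_smul, smul_inv_smul]

theorem tendsto_dist_smul_self {P M ι : Type*} [Monoid P] [TopologicalSpace P]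
    [PseudoMetricSpace M] [MulAction P M] [ContinuousSMul P M] {l : Filter ι} {g : ι → P}
    (hg : Tendsto g l (𝓝 1)) (x : M) :
    Tendsto (fun i => dist (g i • x) x) l (𝓝 0) := by
  simpa using (hg.smul_const x).dist (tendsto_const_nhds (x := x))

theorem mautner_isometric_general
    {P M : Type*} [Group P] [TopologicalSpace P]
    [MetricSpace M] [MulAction P M] [ContinuousSMul P M]
    (hiso : ∀ (g : P) (x y : M), dist (g • x) (g • y) = dist x y)
    (x₀ : M) (u : P) (a : ℕ → P)
    (hfix : ∀ n, a n • x₀ = x₀)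
    (hconj : Tendsto (fun n => (a n)⁻¹ * u * a n) atTop (𝓝 (1 : P))) :
    u • x₀ = x₀ := by
  have hconst : ∀ n, dist (((a n)⁻¹ * u * a n) • x₀) x₀ = dist (u • x₀) x₀ := fun n => by
    rw [dist_conj_smul_eq (hiso (a n)), hfix]
  simpa only [hconst, tendsto_const_nhds_iff, dist_eq_zero] using
    tendsto_dist_smul_self hconj x₀

/-- **Mautner phenomenon for isometric actions.** Let `P` be a topological group
acting continuously by isometries on a metric space `M`. If `x₀ ∈ M` is fixed by each member of
a sequence `aₙ` in `P`, and `aₙ⁻¹ * u * aₙ → e` for some `u ∈ P`, then `u` fixes `x₀`. -/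
theorem mautner_isometric
    {P M : Type*} [Group P] [TopologicalSpace P] [IsTopologicalGroup P]
    [MetricSpace M] [MulAction P M] [ContinuousSMul P M]
    (hiso : ∀ (g : P) (x y : M), dist (g • x) (g • y) = dist x y)
    (x₀ : M) (u : P) (a : ℕ → P)
    (hfix : ∀ n, a n • x₀ = x₀)
    (hconj : Tendsto (fun n => (a n)⁻¹ * u * a n) atTop (𝓝 (1 : P))) :
    u • x₀ = x₀ :=
  mautner_isometric_general hiso x₀ u a hfix hconj
end

section
/- Let Γ be an lcsc group, A an isometrically ergodic Lebesgue Γ-space, G an lcsc group, Σ a locally compact second countable topological space with a continuous proper G-action (for every compact Q ⊂ Σ, the set {g ∈ G : gQ ∩ Q ≠ ∅} is precompact), and ρ : Γ → G a continuous homomorphism. If there exists a Borel map Ψ : A → Σ with Ψ(g.x) = ρ(g).Ψ(x) for every g ∈ Γ and almost every x ∈ A, then ρ(Γ) is precompact in G (its closure is compact). -/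
open MeasureTheory Filter Topology

/-!
Cover `Y` by relatively compact open sets `Uₙ`. Their `G`-saturations are `G`-invariant, so their
`Ψ`-preimages are `Γ`-invariant, and ergodicity puts almost every `Ψ x` into a single saturation
`G • U`. By properness `{g | g⁻¹ • Ψ x ∈ U}` has finite Haar measure, and its indicator is a
`Γ`-equivariant map into `L¹(G)`, on which `Γ` acts isometrically by left translation through `ρ`.
Isometric ergodicity yields a nonzero `u ∈ L¹(G)` fixed by all of `ρ(Γ)`. The finite measure
`‖u‖ • Haar` is then invariant under `ρ(Γ)`, so every translate by some `ρ γ` of an open set `V`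
carrying more than half of its mass meets `V`, whence `ρ(Γ) ⊆ K K⁻¹` for a compact `K ⊇ V`.
-/

open scoped ENNReal Pointwise

universe u v w w'

namespace IsometricallyErgodic

variable {Γ : Type u} [Group Γ] {X : Type v} [MeasurableSpace X] [MulAction Γ X] {μ : Measure X}

/-- The Kuratowski embedding into `ℓ^∞(ℕ)` moves a separable metric space into the universe in
which isometric ergodicity is assumed. -/
theorem exists_fixed_ae_eq (hie : IsometricallyErgodic.{u, v, w} Γ μ)
    (M : Type w') [MetricSpace M] [MeasurableSpace M] [BorelSpace M]
    [TopologicalSpace.SeparableSpace M] [Nonempty M] [MulAction Γ M]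
    (hiso : ∀ (g : Γ) (x y : M), dist (g • x) (g • y) = dist x y)
    {f : X → M} (hf : Measurable f) (hequiv : ∀ g : Γ, ∀ᵐ x ∂μ, f (g • x) = g • f x) :
    ∃ m : M, (∀ g : Γ, g • m = m) ∧ ∀ᵐ x ∂μ, f x = m := by
  let N : Type w := ULift.{w} (Set.range (kuratowskiEmbedding M))
  let e : M ≃ᵢ N := (kuratowskiEmbedding.isometry M).isometryEquivOnRange.trans
    { toEquiv := Equiv.ulift.symm, isometry_toFun := fun _ _ => rfl }
  let _ : MulAction Γ N := e.toEquiv.symm.mulAction Γ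
  have he_smul (g : Γ) (m : M) : e (g • m) = g • e m := by
    simp [Equiv.smul_def]
  have := UniformSpace.secondCountable_of_separable M
  have : SecondCountableTopology N := e.symm.toHomeomorph.secondCountableTopology
  borelize N
  obtain ⟨n, hfix, hae⟩ := hie N
    (fun g x y => by
      rw [← e.apply_symm_apply x, ← e.apply_symm_apply y, ← he_smul, ← he_smul, e.dist_eq,
        e.dist_eq, hiso])
    (e ∘ f) (e.continuous.measurable.comp hf)
    (fun g => by filter_upwards [hequiv g] with x hx; simp [hx, he_smul])
  refine ⟨e.symm n, fun g => e.injective ?_, ?_⟩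
  · simpa [he_smul] using hfix g
  · filter_upwards [hae] with x hx
    simp [← hx]

theorem ae_mem_or_ae_notMem (hie : IsometricallyErgodic.{u, v, w} Γ μ) {s : Set X}
    (hs : MeasurableSet s) (hinv : ∀ g : Γ, ∀ᵐ x ∂μ, (g • x ∈ s ↔ x ∈ s)) :
    (∀ᵐ x ∂μ, x ∈ s) ∨ ∀ᵐ x ∂μ, x ∉ s := by
  let _ : MulAction Γ ℝ :=
    { smul := fun _ r => r, one_smul := fun _ => rfl, mul_smul := fun _ _ _ => rfl }
  obtain ⟨c, -, hc⟩ := hie.exists_fixed_ae_eq ℝ (fun _ _ _ => rfl)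
    (measurable_const.indicator hs : Measurable (s.indicator fun _ => (1 : ℝ)))
    (fun g => by
      filter_upwards [hinv g] with x hx
      change s.indicator _ (g • x) = s.indicator _ x
      classical
      simp only [Set.indicator_apply, hx])
  by_cases hc1 : c = 1
  · left
    filter_upwards [hc] with x hx
    by_contra hxs
    simp [hxs, hc1] at hx
  · right
    filter_upwards [hc] with x hx hxs
    simp [hxs, ← hx] at hc1

theorem exists_ae_mem_of_iUnion_eq_univ (hie : IsometricallyErgodic.{u, v, w} Γ μ) [NeZero μ]
    {ι : Type*} [Countable ι] {s : ι → Set X} (hs : ∀ i, MeasurableSet (s i))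
    (hinv : ∀ i, ∀ g : Γ, ∀ᵐ x ∂μ, (g • x ∈ s i ↔ x ∈ s i)) (hcov : ⋃ i, s i = Set.univ) :
    ∃ i, ∀ᵐ x ∂μ, x ∈ s i := by
  by_contra h
  simp only [not_exists] at h
  have hnull (i : ι) : μ (s i) = 0 :=
    measure_eq_zero_iff_ae_notMem.2 <|
      (hie.ae_mem_or_ae_notMem (hs i) (hinv i)).resolve_left (h i)
  have := measure_iUnion_null hnull
  rw [hcov, Measure.measure_univ_eq_zero] at this
  exact NeZero.ne μ this

theorem exists_ae_exists_inv_smul_mem (hie : IsometricallyErgodic.{u, v, w} Γ μ)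
    [NeZero μ] {G Y : Type*} [Group G] [MulAction G Y] [TopologicalSpace Y]
    [ContinuousConstSMul G Y] [MeasurableSpace Y] [OpensMeasurableSpace Y] {ρ : Γ → G}
    {Ψ : X → Y} (hΨ : Measurable Ψ) (heq : ∀ γ : Γ, ∀ᵐ x ∂μ, Ψ (γ • x) = ρ γ • Ψ x)
    {U : ℕ → Set Y} (hU : ∀ n, IsOpen (U n)) (hcov : ⋃ n, U n = Set.univ) :
    ∃ n, ∀ᵐ x ∂μ, ∃ g : G, g⁻¹ • Ψ x ∈ U n := by
  have hopen (n : ℕ) : IsOpen {y : Y | ∃ g : G, g⁻¹ • y ∈ U n} := by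
    simp only [Set.ofPred_exists]
    exact isOpen_iUnion fun g => (hU n).preimage (continuous_const_smul g⁻¹)
  refine hie.exists_ae_mem_of_iUnion_eq_univ (s := fun n => Ψ ⁻¹' {y | ∃ g : G, g⁻¹ • y ∈ U n})
    (fun n => hΨ (hopen n).measurableSet)
    (fun n γ => ?_) (Set.eq_univ_of_forall fun x => ?_)
  · filter_upwards [heq γ] with x hx
    simp only [Set.mem_preimage, Set.mem_ofPred_eq, hx]
    constructor
    · rintro ⟨g, hg⟩
      exact ⟨(ρ γ)⁻¹ * g, by rwa [mul_inv_rev, inv_inv, mul_smul]⟩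
    · rintro ⟨g, hg⟩
      exact ⟨ρ γ * g, by rwa [mul_inv_rev, mul_smul, inv_smul_smul]⟩
  · obtain ⟨n, hn⟩ := Set.mem_iUnion.1 (hcov.symm ▸ Set.mem_univ (Ψ x))
    exact Set.mem_iUnion.2 ⟨n, 1, by simpa using hn⟩

end IsometricallyErgodic

theorem measurable_of_measurable_dist {X M : Type*} [MeasurableSpace X] [PseudoMetricSpace M]
    [SecondCountableTopology M] [MeasurableSpace M] [BorelSpace M] {f : X → M}
    (h : ∀ c, Measurable fun x => dist (f x) c) : Measurable f := by
  refine measurable_of_isOpen fun O hO => ?_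
  let balls (b : {b : M × ℝ // Metric.ball b.1 b.2 ⊆ O}) := Metric.ball b.1.1 b.1.2
  obtain ⟨T, hTc, hT⟩ :=
    TopologicalSpace.isOpen_iUnion_countable balls fun _ => Metric.isOpen_ball
  have hO_eq : O = ⋃ b ∈ T, balls b := by
    rw [hT]
    refine subset_antisymm (fun y hy => ?_) (Set.iUnion_subset fun b => b.2)
    obtain ⟨ε, hε, hball⟩ := Metric.isOpen_iff.1 hO y hy
    exact Set.mem_iUnion.2 ⟨⟨(y, ε), hball⟩, Metric.mem_ball_self hε⟩
  rw [hO_eq, Set.preimage_iUnion₂]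
  exact .biUnion hTc fun b _ => measurableSet_lt (h _) measurable_const

theorem measurable_indicatorConstLp_prodMk {X α E : Type*} [MeasurableSpace X] [MeasurableSpace α]
    [NormedAddCommGroup E] [TopologicalSpace.SeparableSpace E] {p : ℝ≥0∞} [Fact (1 ≤ p)]
    [Fact (p ≠ ∞)] {ν : Measure α} [SFinite ν] [IsSeparable ν] [MeasurableSpace (Lp E p ν)]
    [BorelSpace (Lp E p ν)] {s : Set (X × α)} (hs : MeasurableSet s)
    (hfin : ∀ x, ν (Prod.mk x ⁻¹' s) ≠ ∞) (c : E) :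
    Measurable fun x => indicatorConstLp p (measurable_prodMk_left hs) (hfin x) c := by
  have hp0 : p ≠ 0 := (zero_lt_one.trans_le Fact.out).ne'
  refine measurable_of_measurable_dist fun v => ?_
  have hdist (x : X) : dist (indicatorConstLp p (measurable_prodMk_left hs) (hfin x) c) v =
      ((∫⁻ a, ‖s.indicator (fun _ => c) (x, a) - v a‖ₑ ^ p.toReal ∂ν) ^ (1 / p.toReal)).toReal := by
    rw [Lp.dist_edist, Lp.edist_def, eLpNorm_congr_ae (indicatorConstLp_coeFn.sub (ae_eq_refl _)),
      eLpNorm_eq_lintegral_rpow_enorm_toReal hp0 Fact.out]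
    rfl
  simp_rw [hdist]
  refine ((Measurable.lintegral_prod_right' (ν := ν)
    (f := fun q : X × α => ‖s.indicator (fun _ => c) q - v q.2‖ₑ ^ p.toReal) ?_).pow_const
      _).ennreal_toReal
  exact ((stronglyMeasurable_const.indicator hs).sub
    ((Lp.stronglyMeasurable v).comp_measurable measurable_snd)).enorm.pow_const _

section InvSmulMemIndicator

variable {G Y : Type*} [Group G] [MulAction G Y]

theorem measure_setOf_inv_smul_mem_lt_top [TopologicalSpace G] [MeasurableSpace G]
    [TopologicalSpace Y]
    (hproper : ∀ Q : Set Y, IsCompact Q →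
      IsCompact (closure {g : G | ((fun y => g • y) '' Q ∩ Q).Nonempty}))
    (ν : Measure G) [IsFiniteMeasureOnCompacts ν] {K : Set Y} (hK : IsCompact K) (y : Y) :
    ν {g : G | g⁻¹ • y ∈ K} < ∞ := by
  refine (measure_mono fun g hg => subset_closure ?_).trans_lt
    (hproper _ (hK.insert y)).measure_lt_top
  exact ⟨y, ⟨g⁻¹ • y, Set.mem_insert_of_mem _ hg, smul_inv_smul g y⟩, Set.mem_insert _ _⟩

variable [MeasurableSpace G] [MeasurableInv G] [MeasurableSpace Y] [MeasurableSMul₂ G Y]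

theorem measurableSet_setOf_inv_smul_mem {U : Set Y} (hU : MeasurableSet U) :
    MeasurableSet {q : Y × G | q.2⁻¹ • q.1 ∈ U} :=
  (measurable_snd.inv.smul measurable_fst) hU

variable (p : ℝ≥0∞) (ν : Measure G) {U : Set Y} (hU : MeasurableSet U)
  (hfin : ∀ y, ν {g : G | g⁻¹ • y ∈ U} ≠ ∞)

/-- The indicator function of `{g | y ∈ g • U}`, as an element of `Lᵖ(G, ν)`. -/
noncomputable def invSmulMemIndicatorLp (y : Y) : Lp ℝ p ν :=
  indicatorConstLp p (measurable_prodMk_left (measurableSet_setOf_inv_smul_mem hU)) (hfin y) 1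

theorem measurable_invSmulMemIndicatorLp [SFinite ν] [IsSeparable ν] [Fact (1 ≤ p)]
    [Fact (p ≠ ∞)] [MeasurableSpace (Lp ℝ p ν)] [BorelSpace (Lp ℝ p ν)] :
    Measurable (invSmulMemIndicatorLp p ν hU hfin) :=
  measurable_indicatorConstLp_prodMk (measurableSet_setOf_inv_smul_mem hU) hfin 1

theorem invSmulMemIndicatorLp_smul [MeasurableMul G] [ν.IsMulLeftInvariant] (h : G) (y : Y) :
    invSmulMemIndicatorLp p ν hU hfin (h • y) =
      DomMulAct.mk h⁻¹ • invSmulMemIndicatorLp p ν hU hfin y := by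
  simp only [invSmulMemIndicatorLp, DomMulAct.mk_smul_indicatorConstLp]
  congr 1
  ext g
  simp [mul_smul]

theorem invSmulMemIndicatorLp_ne_zero [TopologicalSpace G] [ContinuousInv G]
    [TopologicalSpace Y] [ContinuousSMul G Y] [ν.IsOpenPosMeasure] [Fact (1 ≤ p)] (hp : p ≠ ∞)
    (hU' : IsOpen U) {y : Y} (hy : ∃ g : G, g⁻¹ • y ∈ U) :
    invSmulMemIndicatorLp p ν hU hfin y ≠ 0 := by
  have hpos : 0 < ν {g : G | g⁻¹ • y ∈ U} :=
    (hU'.preimage (continuous_inv.smul continuous_const)).measure_pos ν hy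
  have hp0 : p ≠ 0 := (zero_lt_one.trans_le Fact.out).ne'
  rw [← norm_ne_zero_iff, invSmulMemIndicatorLp, norm_indicatorConstLp hp0 hp, norm_one, one_mul]
  exact (Real.rpow_pos_of_pos (ENNReal.toReal_pos hpos.ne' (hfin y)) _).ne'

end InvSmulMemIndicator

section InvariantMeasure

variable {G : Type*} [Group G] [MeasurableSpace G]

theorem map_mul_left_withDensity_enorm_eq [MeasurableMul G] {ν : Measure G}
    [ν.IsMulLeftInvariant] {E : Type*} [NormedAddCommGroup E] {p : ℝ≥0∞} {u : Lp E p ν} {g : G}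
    (hu : DomMulAct.mk g⁻¹ • u = u) :
    (ν.withDensity fun x => ‖u x‖ₑ).map (g * ·) = ν.withDensity fun x => ‖u x‖ₑ := by
  have hu_ae : (fun x => ‖u (g⁻¹ * x)‖ₑ) =ᵐ[ν] fun x => ‖u x‖ₑ := by
    filter_upwards [DomMulAct.smul_Lp_ae_eq (DomMulAct.mk g⁻¹) u] with x hx
    rw [hu] at hx
    simp [hx]
  ext s hs
  rw [Measure.map_apply (measurable_const_mul g) hs,
    withDensity_apply _ (measurable_const_mul g hs), withDensity_apply _ hs, ← lintegral_indicator (measurable_const_mul g hs),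
    ← lintegral_indicator hs, ← lintegral_mul_left_eq_self _ g⁻¹]
  refine lintegral_congr_ae ?_
  filter_upwards [hu_ae] with x hx
  by_cases hxs : x ∈ s
  · rw [Set.indicator_of_mem (by simpa using hxs), Set.indicator_of_mem hxs, hx]
  · rw [Set.indicator_of_notMem (by simpa using hxs), Set.indicator_of_notMem hxs]

theorem isCompact_closure_of_map_mul_left_eq [TopologicalSpace G] [IsTopologicalGroup G]
    [WeaklyLocallyCompactSpace G] [SigmaCompactSpace G] [BorelSpace G] (ν : Measure G)
    [IsFiniteMeasure ν] [NeZero ν] {S : Set G} (hS : ∀ g ∈ S, ν.map (g * ·) = ν) :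
    IsCompact (closure S) := by
  let K := CompactExhaustion.choice G
  have hmono : Monotone fun n => interior (K n) := fun m n hmn => interior_mono (K.subset hmn)
  have hcov : ⋃ n, interior (K n) = Set.univ :=
    Set.eq_univ_of_forall fun x => Set.mem_iUnion.2 <|
      (K.exists_mem_nhds x).imp fun _ => mem_interior_iff_mem_nhds.2
  have hlim := tendsto_measure_iUnion_atTop (μ := ν) hmono
  rw [hcov] at hlim
  have hhalf : ν Set.univ / 2 < ν Set.univ :=
    ENNReal.half_lt_self (NeZero.ne ν ∘ Measure.measure_univ_eq_zero.1) (measure_ne_top _ _)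
  obtain ⟨n, hn⟩ := (hlim.eventually (eventually_gt_nhds hhalf)).exists
  set V := interior (K n)
  refine (((K.isCompact n).mul (K.isCompact n).inv)).closure_of_subset fun g hg => ?_
  have hVg : ν ((g * ·) ⁻¹' V) = ν V := by
    rw [← Measure.map_apply (measurable_const_mul g) isOpen_interior.measurableSet, hS g hg]
  obtain ⟨a, haV, hgaV⟩ : (V ∩ (g * ·) ⁻¹' V).Nonempty :=
    nonempty_inter_of_measure_lt_add ν
      (isOpen_interior.preimage (continuous_const_mul g)).measurableSet
      (Set.subset_univ _) (Set.subset_univ _) <| by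
        rw [hVg]
        calc ν Set.univ = ν Set.univ / 2 + ν Set.univ / 2 := (ENNReal.add_halves _).symm
          _ < ν V + ν V := ENNReal.add_lt_add hn hn
  exact ⟨g * a, interior_subset hgaV, a⁻¹, Set.inv_mem_inv.2 (interior_subset haV), by simp⟩

theorem isCompact_closure_of_smul_Lp_eq_self [TopologicalSpace G] [IsTopologicalGroup G]
    [WeaklyLocallyCompactSpace G] [SigmaCompactSpace G] [BorelSpace G] {ν : Measure G}
    [ν.IsMulLeftInvariant] {E : Type*} [NormedAddCommGroup E] {u : Lp E 1 ν} (hu : u ≠ 0)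
    {S : Set G} (hS : ∀ g ∈ S, DomMulAct.mk g⁻¹ • u = u) : IsCompact (closure S) := by
  have : IsFiniteMeasure (ν.withDensity fun x => ‖u x‖ₑ) := isFiniteMeasure_withDensity <| by
    simpa [eLpNorm_one_eq_lintegral_enorm] using (Lp.eLpNorm_lt_top u).ne
  have : NeZero (ν.withDensity fun x => ‖u x‖ₑ) := ⟨fun h => hu <|
    Lp.eq_zero_iff_ae_eq_zero.2 <| by
      filter_upwards [(withDensity_eq_zero_iff (Lp.aestronglyMeasurable u).enorm).1 h] with x hx
      simpa using hx⟩
  exact isCompact_closure_of_map_mul_left_eq _ fun g hg =>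
    map_mul_left_withDensity_enorm_eq (hS g hg)

end InvariantMeasure

theorem precompact_of_equivariant_map_to_proper_general
    {Γ : Type*} [Group Γ]
    {A : Type*} [MeasurableSpace A] [MulAction Γ A]
    (μ : Measure A) [IsProbabilityMeasure μ]
    (hie : IsometricallyErgodic Γ μ)
    {G : Type*} [Group G] [TopologicalSpace G] [IsTopologicalGroup G]
    [LocallyCompactSpace G] [SecondCountableTopology G]
    {Y : Type*} [TopologicalSpace Y] [LocallyCompactSpace Y] [SecondCountableTopology Y]
    [MeasurableSpace Y] [BorelSpace Y]
    [MulAction G Y] [ContinuousSMul G Y]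
    (hproper : ∀ Q : Set Y, IsCompact Q →
      IsCompact (closure {g : G | ((fun y => g • y) '' Q ∩ Q).Nonempty}))
    (ρ : Γ →* G)
    (Ψ : A → Y) (hΨ : Measurable Ψ)
    (heq : ∀ g : Γ, ∀ᵐ x ∂μ, Ψ (g • x) = ρ g • Ψ x) :
    IsCompact (closure (Set.range ρ)) := by
  borelize G
  let ν : Measure G := Measure.haar
  let K := CompactExhaustion.choice Y
  obtain ⟨n, hn⟩ := hie.exists_ae_exists_inv_smul_mem hΨ heq (fun n => isOpen_interior)
    (Set.eq_univ_of_forall fun y => Set.mem_iUnion.2 <|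
      (K.exists_mem_nhds y).imp fun _ => mem_interior_iff_mem_nhds.2)
  have hfin (y : Y) : ν {g : G | g⁻¹ • y ∈ interior (K n)} ≠ ∞ :=
    ne_top_of_le_ne_top (measure_setOf_inv_smul_mem_lt_top hproper ν (K.isCompact n) y).ne
      (measure_mono fun _ hg => interior_subset (s := K n) hg)
  let F := invSmulMemIndicatorLp 1 ν isOpen_interior.measurableSet hfin
  let _ : MulAction Γ (Lp ℝ 1 ν) := MulAction.compHom _ <|
    MonoidHom.mk' (fun γ => DomMulAct.mk (ρ γ)⁻¹) fun a b => by simp [DomMulAct.mk_mul]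
  have : Fact ((1 : ℝ≥0∞) ≠ ∞) := ⟨ENNReal.one_ne_top⟩
  borelize ↥(Lp ℝ 1 ν)
  obtain ⟨u, hu_fix, hu_ae⟩ := hie.exists_fixed_ae_eq ↥(Lp ℝ 1 ν)
    (fun γ => DomMulAct.dist_smul_Lp _) (f := F ∘ Ψ)
    ((measurable_invSmulMemIndicatorLp _ _ _ _).comp hΨ)
    fun γ => by
      filter_upwards [heq γ] with x hx
      exact (congrArg F hx).trans (invSmulMemIndicatorLp_smul _ _ _ _ _ _)
  have hu0 : u ≠ 0 := by
    obtain ⟨x, hxu, hxn⟩ := (hu_ae.and hn).exists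
    exact hxu ▸ invSmulMemIndicatorLp_ne_zero _ _ isOpen_interior.measurableSet _ ENNReal.one_ne_top
      isOpen_interior hxn
  exact isCompact_closure_of_smul_Lp_eq_self hu0 fun _ ⟨γ, hγ⟩ => hγ ▸ hu_fix γ

/-- Let `Γ` be an lcsc group, `A` an isometrically ergodic Lebesgue `Γ`-space,
`G` an lcsc group acting continuously and properly on a locally compact second countable space
`Y`, and `ρ : Γ → G` a continuous homomorphism. If there is a Borel map `Ψ : A → Y` with
`Ψ(g.x) = ρ(g).Ψ(x)` for every `g ∈ Γ` and a.e. `x ∈ A`, then `ρ(Γ)` is precompact in `G`. -/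
theorem precompact_of_equivariant_map_to_proper
    {Γ : Type*} [Group Γ] [TopologicalSpace Γ] [IsTopologicalGroup Γ]
    [LocallyCompactSpace Γ] [SecondCountableTopology Γ]
    [MeasurableSpace Γ] [BorelSpace Γ]
    {A : Type*} [MeasurableSpace A] [StandardBorelSpace A] [MulAction Γ A]
    [MeasurableSMul Γ A]
    (μ : Measure A) [IsProbabilityMeasure μ]
    (hqi : QuasiInvariant Γ μ)
    (hie : IsometricallyErgodic Γ μ)
    {G : Type*} [Group G] [TopologicalSpace G] [IsTopologicalGroup G]
    [LocallyCompactSpace G] [SecondCountableTopology G]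
    {Y : Type*} [TopologicalSpace Y] [LocallyCompactSpace Y] [SecondCountableTopology Y]
    [MeasurableSpace Y] [BorelSpace Y]
    [MulAction G Y] [ContinuousSMul G Y]
    (hproper : ∀ Q : Set Y, IsCompact Q →
      IsCompact (closure {g : G | ((fun y => g • y) '' Q ∩ Q).Nonempty}))
    (ρ : Γ →* G) (hρ : Continuous ρ)
    (Ψ : A → Y) (hΨ : Measurable Ψ)
    (heq : ∀ g : Γ, ∀ᵐ x ∂μ, Ψ (g • x) = ρ g • Ψ x) :
    IsCompact (closure (Set.range ρ)) :=
  precompact_of_equivariant_map_to_proper_general μ hie hproper ρ Ψ hΨ heq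
end

section
/- Let G ⟳ M be a convergence action of an lcsc group G on a compact metrizable space M, let η be a Borel probability measure on M, and let (gₙ) be a sequence in G that eventually leaves every compact subset of G. If the pushforward measures (gₙ)_*η converge weak-* to a probability measure ξ, then the support of ξ contains at most two points. -/
open MeasureTheory Filter Topology

/-- The set `M^(3)` of triples of pairwise distinct points of `M`. -/
def distinctTriples (M : Type*) : Set (M × M × M) :=
  {p | p.1 ≠ p.2.1 ∧ p.1 ≠ p.2.2 ∧ p.2.1 ≠ p.2.2}

/-- A continuous action `G ⟳ M` is a *convergence action* if the diagonal `G`-action on the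
space `M^(3)` of distinct triples is proper: for every compact `Q ⊆ M^(3)` the set
`{g : gQ ∩ Q ≠ ∅}` is precompact in `G`. -/
def IsConvergenceAction (G M : Type*) [Group G] [TopologicalSpace G] [TopologicalSpace M]
    [MulAction G M] : Prop :=
  ∀ Q : Set (M × M × M), Q ⊆ distinctTriples M → IsCompact Q →
    IsCompact (closure {g : G |
      ((fun p : M × M × M => (g • p.1, g • p.2.1, g • p.2.2)) '' Q ∩ Q).Nonempty})

/-!
If the support of `ξ` contained three distinct points `a, b, c`, pick disjoint closed balls
around them. By the portmanteau theorem each ball `B` has `η (gₙ⁻¹ B) ≥ δ > 0` for large `n`,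
so the boxes `gₙ⁻¹ B_a × gₙ⁻¹ B_b × gₙ⁻¹ B_c` have `η³`-mass at least `δ³`, and some triple
`p` lies in infinitely many of them. Then `gₙ p` returns infinitely often to the compact set
`B_a × B_b × B_c ⊆ M^(3)`, which properness of the action on `M^(3)` forbids as `gₙ → ∞`.
-/

theorem Measure.exists_three_mem_support {X : Type*} [TopologicalSpace X]
    [HereditarilyLindelofSpace X] [MeasurableSpace X] {μ : Measure X} (hμ : μ ≠ 0)
    (h : ∀ a b : X, μ {a, b}ᶜ ≠ 0) :
    ∃ a ∈ μ.support, ∃ b ∈ μ.support, ∃ c ∈ μ.support, a ≠ b ∧ a ≠ c ∧ b ≠ c := by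
  obtain ⟨a, ha⟩ := Measure.nonempty_support hμ
  obtain ⟨b, hab, hb⟩ := Measure.nonempty_inter_support_of_pos (pos_iff_ne_zero.2 (h a a))
  obtain ⟨c, habc, hc⟩ := Measure.nonempty_inter_support_of_pos (pos_iff_ne_zero.2 (h a b))
  simp only [Set.pair_eq_singleton, Set.mem_compl_iff, Set.mem_singleton_iff,
    Set.mem_insert_iff, not_or] at hab habc
  exact ⟨a, ha, b, hb, c, hc, Ne.symm hab, Ne.symm habc.1, Ne.symm habc.2⟩

theorem prod_prod_subset_distinctTriples {M : Type*} {A B C : Set M} (hAB : Disjoint A B)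
    (hAC : Disjoint A C) (hBC : Disjoint B C) : A ×ˢ B ×ˢ C ⊆ distinctTriples M :=
  fun _ ⟨ha, hb, hc⟩ => ⟨hAB.ne_of_mem ha hb, hAC.ne_of_mem ha hc, hBC.ne_of_mem hb hc⟩

theorem exists_pos_closedBall_prod_subset_distinctTriples {M : Type*} [MetricSpace M]
    {a b c : M} (hab : a ≠ b) (hac : a ≠ c) (hbc : b ≠ c) :
    ∃ r > 0, Metric.closedBall a r ×ˢ Metric.closedBall b r ×ˢ Metric.closedBall c r ⊆
      distinctTriples M := by
  have hdisj : ∀ {x y : M}, x ≠ y →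
      ∀ᶠ r in 𝓝[>] (0 : ℝ), Disjoint (Metric.closedBall x r) (Metric.closedBall y r) := by
    intro x y hxy
    filter_upwards [Ioo_mem_nhdsGT (half_pos (dist_pos.2 hxy))] with r hr
    exact Metric.closedBall_disjoint_closedBall (by linarith [hr.2])
  obtain ⟨r, hr, hAB, hAC, hBC⟩ :=
    (eventually_mem_nhdsWithin.and ((hdisj hab).and ((hdisj hac).and (hdisj hbc)))).exists
  exact ⟨r, hr, prod_prod_subset_distinctTriples hAB hAC hBC⟩

theorem ProbabilityMeasure.exists_eventually_le_measure_of_tendsto {Ω ι : Type*}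
    [MeasurableSpace Ω] [TopologicalSpace Ω] [OpensMeasurableSpace Ω] [HasOuterApproxClosed Ω]
    {L : Filter ι} {μs : ι → ProbabilityMeasure Ω} {μ : ProbabilityMeasure Ω}
    (hμs : Tendsto μs L (𝓝 μ)) {U : Set Ω} (hU : IsOpen U) (hμU : (μ : Measure Ω) U ≠ 0) :
    ∃ δ ≠ 0, ∀ᶠ i in L, δ ≤ (μs i : Measure Ω) U := by
  obtain ⟨δ, hδ, hδU⟩ := exists_between (pos_iff_ne_zero.2 hμU)
  exact ⟨δ, hδ.ne', (eventually_lt_of_lt_liminf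
    (hδU.trans_le (ProbabilityMeasure.le_liminf_measure_open_of_tendsto hμs hU))).mono
    fun _ => le_of_lt⟩

theorem exists_frequently_mem_of_eventually_le_measure {α : Type*} [MeasurableSpace α]
    (μ : Measure α) [IsFiniteMeasure μ] {s : ℕ → Set α} (hs : ∀ n, MeasurableSet (s n))
    {δ : ENNReal} (hδ : δ ≠ 0) (h : ∀ᶠ n in atTop, δ ≤ μ (s n)) :
    ∃ x, ∃ᶠ n in atTop, x ∈ s n := by
  obtain ⟨N, hN⟩ := eventually_atTop.1 h
  have htail : ∀ k, δ ≤ μ (⋃ n ≥ k, s n) := fun k =>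
    (hN _ (le_max_right k N)).trans (measure_mono (Set.subset_biUnion_of_mem (le_max_left k N)))
  have hlim : δ ≤ μ (limsup s atTop) := by
    rw [limsup_eq_iInf_iSup_of_nat]
    change δ ≤ μ (⋂ k, ⋃ n ≥ k, s n)
    rw [Antitone.measure_iInter]
    · exact le_iInf htail
    · exact fun k k' hk => Set.biUnion_subset_biUnion_left fun n hn => le_trans hk hn
    · exact fun k =>
        (MeasurableSet.biUnion (Set.to_countable _) fun n _ => hs n).nullMeasurableSet
    · exact ⟨0, measure_ne_top _ _⟩
  obtain ⟨x, hx⟩ := nonempty_of_measure_ne_zero (ne_bot_of_le_ne_bot hδ hlim)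
  exact ⟨x, mem_limsup_iff_frequently_mem.1 hx⟩

theorem exists_frequently_mem_prod_prod {α : Type*} [MeasurableSpace α] (μ : Measure α)
    [IsFiniteMeasure μ] {A B C : ℕ → Set α} (hA : ∀ n, MeasurableSet (A n))
    (hB : ∀ n, MeasurableSet (B n)) (hC : ∀ n, MeasurableSet (C n))
    (hμA : ∃ δ ≠ 0, ∀ᶠ n in atTop, δ ≤ μ (A n)) (hμB : ∃ δ ≠ 0, ∀ᶠ n in atTop, δ ≤ μ (B n))
    (hμC : ∃ δ ≠ 0, ∀ᶠ n in atTop, δ ≤ μ (C n)) :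
    ∃ p : α × α × α, ∃ᶠ n in atTop, p ∈ A n ×ˢ B n ×ˢ C n := by
  obtain ⟨δA, hδA, hA'⟩ := hμA
  obtain ⟨δB, hδB, hB'⟩ := hμB
  obtain ⟨δC, hδC, hC'⟩ := hμC
  refine exists_frequently_mem_of_eventually_le_measure (μ.prod (μ.prod μ))
    (fun n => (hA n).prod ((hB n).prod (hC n))) (mul_ne_zero hδA (mul_ne_zero hδB hδC)) ?_
  filter_upwards [hA', hB', hC'] with n hAn hBn hCn
  rw [Measure.prod_prod, Measure.prod_prod]
  gcongr

theorem smul_mem_distinctTriples_iff {G M : Type*} [Group G] [MulAction G M] (g : G)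
    (p : M × M × M) : g • p ∈ distinctTriples M ↔ p ∈ distinctTriples M := by
  simp only [distinctTriples, Set.mem_ofPred_eq, Prod.smul_fst, Prod.smul_snd, ne_eq,
    smul_left_cancel_iff]

theorem IsConvergenceAction.not_frequently_smul_mem {G M ι : Type*} [Group G]
    [TopologicalSpace G] [TopologicalSpace M] [MulAction G M] (hconv : IsConvergenceAction G M)
    {l : Filter ι} {g : ι → G} (hg : Tendsto g l (cocompact G)) {K : Set (M × M × M)}
    (hK : IsCompact K) (hKd : K ⊆ distinctTriples M) (p : M × M × M) :
    ¬ ∃ᶠ i in l, g i • p ∈ K := by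
  intro hfreq
  obtain ⟨i, hi⟩ := hfreq.exists
  have hp : p ∈ distinctTriples M := (smul_mem_distinctTriples_iff (g i) p).1 (hKd hi)
  have hfar := hg (hconv _ (Set.insert_subset hp hKd) (hK.insert p)).compl_mem_cocompact
  obtain ⟨i, hin, hout⟩ := (hfreq.and_eventually hfar).exists
  exact hout <| subset_closure
    ⟨g i • p, ⟨p, Set.mem_insert _ _, rfl⟩, Set.mem_insert_of_mem _ hin⟩

theorem limit_measure_convergence_action_two_points_general
    {G : Type*} [Group G] [TopologicalSpace G]
    {M : Type*} [TopologicalSpace M] [CompactSpace M] [TopologicalSpace.MetrizableSpace M]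
    [MeasurableSpace M] [BorelSpace M]
    [MulAction G M] [ContinuousSMul G M]
    (hconv : IsConvergenceAction G M)
    (η ξ : Measure M) [IsProbabilityMeasure η] [IsProbabilityMeasure ξ]
    (g : ℕ → G) (hg : Tendsto g atTop (cocompact G))
    (hlim : ∀ f : C(M, ℝ),
      Tendsto (fun n => ∫ y, f (g n • y) ∂η) atTop (𝓝 (∫ y, f y ∂ξ))) :
    ∃ a b : M, ξ ({a, b}ᶜ) = 0 := by
  let _ : MetricSpace M := TopologicalSpace.metrizableSpaceMetric M
  by_contra! h
  obtain ⟨a, ha, b, hb, c, hc, hab, hac, hbc⟩ :=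
    Measure.exists_three_mem_support (IsProbabilityMeasure.ne_zero ξ) h
  obtain ⟨r, hr, hK⟩ := exists_pos_closedBall_prod_subset_distinctTriples hab hac hbc
  have hgn : ∀ n, Measurable (g n • · : M → M) :=
    fun n => (continuous_const_smul (g n)).measurable
  let ν : ℕ → ProbabilityMeasure M := fun n =>
    ⟨η.map (g n • ·), Measure.isProbabilityMeasure_map (hgn n).aemeasurable⟩
  have hν : Tendsto ν atTop (𝓝 ⟨ξ, ‹_›⟩) :=
    ProbabilityMeasure.tendsto_iff_forall_integral_tendsto.2 fun f => by
      simpa [ν, integral_map (hgn _).aemeasurable f.continuous.aestronglyMeasurable] using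
        hlim f.toContinuousMap
  have hball : ∀ p n, MeasurableSet ((g n • ·) ⁻¹' Metric.ball p r) :=
    fun p n => hgn n Metric.isOpen_ball.measurableSet
  have hmass : ∀ p ∈ ξ.support,
      ∃ δ ≠ 0, ∀ᶠ n in atTop, δ ≤ η ((g n • ·) ⁻¹' Metric.ball p r) := fun p hp => by
    simpa [ν, Measure.map_apply (hgn _) Metric.isOpen_ball.measurableSet] using
      ProbabilityMeasure.exists_eventually_le_measure_of_tendsto hν Metric.isOpen_ball
        ((Measure.mem_support_iff_forall p).1 hp _ (Metric.ball_mem_nhds p hr)).ne'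
  obtain ⟨x, hx⟩ := exists_frequently_mem_prod_prod η (hball a) (hball b) (hball c)
    (hmass a ha) (hmass b hb) (hmass c hc)
  refine hconv.not_frequently_smul_mem hg ?_ hK x (hx.mono fun n hn => ?_)
  · exact (Metric.isClosed_closedBall.prod
      (Metric.isClosed_closedBall.prod Metric.isClosed_closedBall)).isCompact
  · exact Set.prod_mono Metric.ball_subset_closedBall
      (Set.prod_mono Metric.ball_subset_closedBall Metric.ball_subset_closedBall) hn

/-- For a convergence action `G ⟳ M` of an lcsc group on a compact metrizable
space, a Borel probability measure `η` on `M`, and a sequence `gₙ → ∞` in `G` (leaving every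
compact set), if `(gₙ)_*η` converges weak-* to a probability measure `ξ`, then `ξ` is supported
on at most two points. -/
theorem limit_measure_convergence_action_two_points
    {G : Type*} [Group G] [TopologicalSpace G] [IsTopologicalGroup G]
    [LocallyCompactSpace G] [SecondCountableTopology G]
    {M : Type*} [TopologicalSpace M] [CompactSpace M] [TopologicalSpace.MetrizableSpace M]
    [MeasurableSpace M] [BorelSpace M]
    [MulAction G M] [ContinuousSMul G M]
    (hconv : IsConvergenceAction G M)
    (η ξ : Measure M) [IsProbabilityMeasure η] [IsProbabilityMeasure ξ]
    (g : ℕ → G) (hg : Tendsto g atTop (cocompact G))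
    (hlim : ∀ f : C(M, ℝ),
      Tendsto (fun n => ∫ y, f (g n • y) ∂η) atTop (𝓝 (∫ y, f y ∂ξ))) :
    ∃ a b : M, ξ ({a, b}ᶜ) = 0 :=
  limit_measure_convergence_action_two_points_general hconv η ξ g hg hlim
end

section
/- Let M be a compact metrizable space, G a closed subgroup of Homeo(M) (with the topology of uniform convergence), and η a Borel probability measure on M. Assume: (*)₁ every sequence (gₙ) in G such that (gₙ)_*η → η in the weak-* topology is bounded (precompact) in G; and (*)₂ for every g ∈ G \ {e} there exist h, k ∈ C(M) with ∫_M (h(g.y) − h(y))·k(y) dη(y) ≠ 0. Then every sequence (gₙ) in G satisfying ∫_M (h(gₙ.y) − h(y))·k(y) dη(y) → 0 for all h, k ∈ C(M) converges to the identity e in G. -/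
open MeasureTheory Filter Topology

/-! Testing `(*)₁` against `k = 1` shows that the sequence is precompact. The pairings
`a ↦ ∫ (h ∘ a - h) k dη` are continuous for the uniform topology, so they vanish at every cluster
point of the sequence, which is therefore `e` by `(*)₂`; a sequence in a compact set with a unique
cluster point converges to it. -/

/-- The group of self-homeomorphisms of a topological space, under composition. -/
instance homeomorphGroup {α : Type*} [TopologicalSpace α] : Group (α ≃ₜ α) where
  mul f g := g.trans f
  one := Homeomorph.refl α
  inv := Homeomorph.symm
  mul_assoc f g h := Homeomorph.ext fun _ => rfl
  one_mul f := Homeomorph.ext fun _ => rfl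
  mul_one f := Homeomorph.ext fun _ => rfl
  inv_mul_cancel f := Homeomorph.ext fun x => f.symm_apply_apply x

/-- The topology of uniform convergence on the homeomorphism group of a compact space:
the topology induced from the compact-open (= uniform convergence) topology on `C(α, α)`. -/
instance homeomorphTopology {α : Type*} [TopologicalSpace α] : TopologicalSpace (α ≃ₜ α) :=
  TopologicalSpace.induced (fun f : α ≃ₜ α => (f : C(α, α))) ContinuousMap.compactOpen

theorem tendsto_of_isCompact_of_separating {X Y Z ι : Type*} [TopologicalSpace X]
    [TopologicalSpace Z] [T2Space Z] {l : Filter Y} {u : Y → X} {K : Set X} {x₀ : X}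
    (hK : IsCompact K) (huK : ∀ᶠ n in l, u n ∈ K) (φ : ι → X → Z) (c : ι → Z)
    (hφ : ∀ i, Continuous (φ i)) (hsep : ∀ a ∈ K, (∀ i, φ i a = c i) → a = x₀)
    (hu : ∀ i, Tendsto (φ i ∘ u) l (𝓝 (c i))) : Tendsto u l (𝓝 x₀) := by
  refine hK.tendsto_nhds_of_unique_mapClusterPt huK fun a haK ha => hsep a haK fun i => ?_
  have hcluster : MapClusterPt (φ i a) l (φ i ∘ u) := ha.continuousAt_comp (hφ i).continuousAt
  exact eq_of_nhds_neBot (hcluster.neBot.mono (inf_le_inf_left _ (hu i)))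

section CompactSpace

variable {M : Type*} [TopologicalSpace M] [CompactSpace M] [MeasurableSpace M]
  [OpensMeasurableSpace M] (η : Measure M) [IsFiniteMeasure η]

theorem ContinuousMap.integrable_of_compactSpace (f : C(M, ℝ)) : Integrable f η :=
  f.continuous.integrable_of_hasCompactSupport (.of_compactSpace _)

theorem ContinuousMap.lipschitzWith_integral :
    LipschitzWith (η.real Set.univ).toNNReal fun f : C(M, ℝ) => ∫ y, f y ∂η := by
  refine .of_dist_le_mul fun f f' => ?_
  rw [dist_eq_norm, dist_eq_norm, Real.coe_toNNReal _ measureReal_nonneg, mul_comm,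
    ← integral_sub (f.integrable_of_compactSpace η) (f'.integrable_of_compactSpace η)]
  exact norm_integral_le_of_norm_le_const (.of_forall fun y => (f - f').norm_coe_le_norm y)

theorem continuous_integral_comp_sub_mul (h k : C(M, ℝ)) :
    Continuous fun f : C(M, M) => ∫ y, (h (f y) - h y) * k y ∂η :=
  (ContinuousMap.lipschitzWith_integral η).continuous.comp
    (((ContinuousMap.continuous_postcomp h).sub continuous_const).mul continuous_const)

theorem integral_comp_sub_mul_one (h : C(M, ℝ)) {f : M → M} (hf : Continuous f) :
    ∫ y, (h (f y) - h y) * (1 : C(M, ℝ)) y ∂η = ∫ y, h (f y) ∂η - ∫ y, h y ∂η := by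
  simp only [ContinuousMap.one_apply, mul_one]
  exact integral_sub ((h.comp ⟨f, hf⟩).integrable_of_compactSpace η)
    (h.integrable_of_compactSpace η)

end CompactSpace

theorem tendsto_one_of_weak_star_conditions_general
    {M : Type*} [TopologicalSpace M] [CompactSpace M]
    [MeasurableSpace M] [BorelSpace M]
    (G : Subgroup (M ≃ₜ M))
    (η : Measure M) [IsProbabilityMeasure η]
    (hstar1 : ∀ g : ℕ → ↥G,
      (∀ f : C(M, ℝ),
        Tendsto (fun n => ∫ y, f ((g n : M ≃ₜ M) y) ∂η) atTop (𝓝 (∫ y, f y ∂η))) →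
      IsCompact (closure (Set.range g)))
    (hstar2 : ∀ g : ↥G, g ≠ 1 →
      ∃ h k : C(M, ℝ), ∫ y, (h ((g : M ≃ₜ M) y) - h y) * k y ∂η ≠ 0) :
    ∀ g : ℕ → ↥G,
      (∀ h k : C(M, ℝ),
        Tendsto (fun n => ∫ y, (h ((g n : M ≃ₜ M) y) - h y) * k y ∂η) atTop (𝓝 (0 : ℝ))) →
      Tendsto g atTop (𝓝 (1 : ↥G)) := by
  intro g hg
  have hK : IsCompact (closure (Set.range g)) := hstar1 g fun f => by
    convert (hg f 1).add_const (∫ y, f y ∂η) using 2 with n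
    · rw [integral_comp_sub_mul_one η f (g n : M ≃ₜ M).continuous, sub_add_cancel]
    · rw [zero_add]
  refine tendsto_of_isCompact_of_separating hK
    (.of_forall fun n => subset_closure ⟨n, rfl⟩)
    (fun (hk : C(M, ℝ) × C(M, ℝ)) (a : G) => ∫ y, (hk.1 ((a : M ≃ₜ M) y) - hk.1 y) * hk.2 y ∂η)
    0 (fun hk => ?_) (fun a _ ha => ?_) (fun hk => hg hk.1 hk.2)
  · exact (continuous_integral_comp_sub_mul η hk.1 hk.2).comp
      ((continuous_induced_dom (α := M ≃ₜ M)).comp continuous_subtype_val)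
  · by_contra hne
    obtain ⟨h, k, hhk⟩ := hstar2 a hne
    exact hhk (ha (h, k))

/-- Let `M` be a compact metrizable space, `G` a closed subgroup of
`Homeo(M)`, and `η` a Borel probability measure on `M` satisfying
`(*)₁`: every sequence `(gₙ)` in `G` with `(gₙ)_*η → η` weak-* is precompact in `G`; and
`(*)₂`: for every `g ≠ e` in `G` there are `h, k ∈ C(M)` with `∫ (h ∘ g − h)·k dη ≠ 0`.
Then every sequence `(gₙ)` in `G` with `∫ (h ∘ gₙ − h)·k dη → 0` for all `h, k ∈ C(M)`
converges to the identity in `G`. -/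
theorem tendsto_one_of_weak_star_conditions
    {M : Type*} [TopologicalSpace M] [CompactSpace M] [TopologicalSpace.MetrizableSpace M]
    [MeasurableSpace M] [BorelSpace M]
    (G : Subgroup (M ≃ₜ M)) (hGclosed : IsClosed (G : Set (M ≃ₜ M)))
    (η : Measure M) [IsProbabilityMeasure η]
    (hstar1 : ∀ g : ℕ → ↥G,
      (∀ f : C(M, ℝ),
        Tendsto (fun n => ∫ y, f ((g n : M ≃ₜ M) y) ∂η) atTop (𝓝 (∫ y, f y ∂η))) →
      IsCompact (closure (Set.range g)))
    (hstar2 : ∀ g : ↥G, g ≠ 1 →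
      ∃ h k : C(M, ℝ), ∫ y, (h ((g : M ≃ₜ M) y) - h y) * k y ∂η ≠ 0) :
    ∀ g : ℕ → ↥G,
      (∀ h k : C(M, ℝ),
        Tendsto (fun n => ∫ y, (h ((g n : M ≃ₜ M) y) - h y) * k y ∂η) atTop (𝓝 (0 : ℝ))) →
      Tendsto g atTop (𝓝 (1 : ↥G)) :=
  tendsto_one_of_weak_star_conditions_general G η hstar1 hstar2
end

section
/- Let (X,m,T) be an invertible ergodic probability-measure-preserving system and let h ∈ L¹(X,m) be such that for m-almost every x ∈ X the ergodic sums h(x) + h(Tx) + ⋯ + h(Tⁿx) tend to +∞ as n → ∞. Then ∫_X h dm > 0. -/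
open MeasureTheory Filter Topology

/-!
Let `ψ x = inf_{n ≥ 0} S_n h x` be the running minimum of the Birkhoff sums, finite a.e. because
`S_n h x → +∞`. From `S_{n+1} h x = h x + S_n h (T x)` one gets `ψ = min 0 (h + ψ ∘ T)`,
i.e. `h = (h + ψ ∘ T)⁺ + (ψ - ψ ∘ T)`. The coboundary `ψ - ψ ∘ T` has integral zero, so
`∫ h = ∫ (h + ψ ∘ T)⁺ ≥ 0`. If this integral vanished, `h = ψ - ψ ∘ T` a.e., so
`ψ (Tⁿ x) = ψ x - S_n h x → -∞`, which Poincaré recurrence forbids.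
-/

section BirkhoffSum

variable {α : Type*}

theorem birkhoffSum_sub_comp {G : Type*} [AddCommGroup G] (f : α → α) (ψ : α → G) (n : ℕ)
    (x : α) : birkhoffSum f (fun y => ψ y - ψ (f y)) n x = ψ x - ψ (f^[n] x) := by
  simp only [birkhoffSum, ← Function.iterate_succ_apply' f]
  exact Finset.sum_range_sub' (fun k => ψ (f^[k] x)) n

-- When the sums are unbounded below this is `0`, the junk value of `⨅` on `ℝ`.
noncomputable def birkhoffSumInf (f : α → α) (g : α → ℝ) (x : α) : ℝ :=
  ⨅ n, birkhoffSum f g n x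

theorem birkhoffSumInf_nonpos (f : α → α) (g : α → ℝ) (x : α) :
    birkhoffSumInf f g x ≤ 0 :=
  Real.iInf_nonpos' ⟨0, (birkhoffSum_zero f g x).le⟩

theorem birkhoffSumInf_eq_min_zero_add {f : α → α} {g : α → ℝ} {x : α}
    (hb : BddBelow (Set.range fun n => birkhoffSum f g n (f x))) :
    birkhoffSumInf f g x = min 0 (g x + birkhoffSumInf f g (f x)) := by
  obtain ⟨b, hb'⟩ := hb
  have hbdd : BddBelow (Set.range fun n => birkhoffSum f g n x) := by
    refine ⟨min 0 (g x + b), ?_⟩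
    rintro _ ⟨_ | n, rfl⟩
    · simp
    · simp only [birkhoffSum_succ']
      exact (min_le_right _ _).trans (add_le_add le_rfl (hb' ⟨n, rfl⟩))
  apply le_antisymm
  · refine le_min ((ciInf_le hbdd 0).trans_eq (birkhoffSum_zero f g x)) ?_
    have : birkhoffSumInf f g x - g x ≤ birkhoffSumInf f g (f x) :=
      le_ciInf fun n => sub_le_iff_le_add'.2 <|
        (ciInf_le hbdd (n + 1)).trans_eq (birkhoffSum_succ' f g n x)
    linarith
  · refine le_ciInf ?_
    rintro (_ | n)
    · simp
    · rw [birkhoffSum_succ']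
      exact (min_le_right _ _).trans (add_le_add le_rfl (ciInf_le ⟨b, hb'⟩ n))

end BirkhoffSum

section

variable {X : Type*} [MeasurableSpace X] {μ : Measure X} {T : X → X}

theorem Measurable.birkhoffSumInf {g : X → ℝ} (hg : Measurable g) (hT : Measurable T) :
    Measurable (birkhoffSumInf T g) :=
  Measurable.iInf fun _ => Finset.measurable_sum _ fun k _ => hg.comp (hT.iterate k)

namespace MeasureTheory.MeasurePreserving

theorem integral_comp_of_measurable (hT : MeasurePreserving T μ μ) {g : X → ℝ}
    (hg : Measurable g) : ∫ x, g (T x) ∂μ = ∫ x, g x ∂μ := by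
  rw [← integral_map hT.aemeasurable (by rw [hT.map_eq]; exact hg.aestronglyMeasurable),
    hT.map_eq]

/-- The truncations `max (-N) (min N ψ)` are bounded, so their coboundaries have integral zero, and
they are `1`-Lipschitz, so dominated convergence applies. -/
theorem integral_sub_comp_eq_zero [IsFiniteMeasure μ] (hT : MeasurePreserving T μ μ)
    {ψ : X → ℝ} (hψ : Measurable ψ) (hint : Integrable (fun x => ψ x - ψ (T x)) μ) :
    ∫ x, (ψ x - ψ (T x)) ∂μ = 0 := by
  set clamp : ℕ → ℝ → ℝ := fun N t => max (-N) (min N t)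
  have hlip : ∀ N s t, |clamp N s - clamp N t| ≤ |s - t| := fun N s t => by
    refine (abs_max_sub_max_le_max _ _ _ _).trans (max_le (by simp [abs_nonneg]) ?_)
    simpa using abs_min_sub_min_le_max (N : ℝ) s N t
  have hclamp : ∀ t, ∀ᶠ N in atTop, clamp N t = t := fun t => by
    filter_upwards [eventually_ge_atTop ⌈|t|⌉₊] with N hN
    obtain ⟨h₁, h₂⟩ := abs_le.1 (Nat.ceil_le.1 hN)
    simp only [clamp, min_eq_right h₂, max_eq_right h₁]
  have hmeas : ∀ N, Measurable fun x => clamp N (ψ x) := fun N =>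
    measurable_const.max (measurable_const.min hψ)
  have hzero : ∀ N, ∫ x, (clamp N (ψ x) - clamp N (ψ (T x))) ∂μ = 0 := fun N => by
    have hbdd : Integrable (fun x => clamp N (ψ x)) μ := by
      refine .of_bound (hmeas N).aestronglyMeasurable N (ae_of_all _ fun x => abs_le.2 ⟨?_, ?_⟩)
      · exact le_max_left _ _
      · exact max_le (neg_le_self N.cast_nonneg) (min_le_left _ _)
    have hbdd_comp : Integrable (fun x => clamp N (ψ (T x))) μ :=
      hT.integrable_comp_of_integrable hbdd
    rw [integral_sub hbdd hbdd_comp,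
      hT.integral_comp_of_measurable (hmeas N), sub_self]
  have hlim := tendsto_integral_of_dominated_convergence
    (F := fun N x => clamp N (ψ x) - clamp N (ψ (T x))) (fun x => |ψ x - ψ (T x)|)
    (fun N => ((hmeas N).sub ((hmeas N).comp hT.measurable)).aestronglyMeasurable) hint.abs
    (fun N => ae_of_all _ fun x => hlip N (ψ x) (ψ (T x)))
    (ae_of_all _ fun x => tendsto_const_nhds.congr' <| by
      filter_upwards [hclamp (ψ x), hclamp (ψ (T x))] with N h₁ h₂
      rw [h₁, h₂])
  simp only [hzero] at hlim
  exact tendsto_nhds_unique hlim tendsto_const_nhds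

theorem ae_not_tendsto_comp_iterate_atBot [IsFiniteMeasure μ] (hT : MeasurePreserving T μ μ)
    {g : X → ℝ} (hg : Measurable g) :
    ∀ᵐ x ∂μ, ¬Tendsto (fun n => g (T^[n] x)) atTop atBot := by
  have hrec : ∀ᵐ x ∂μ, ∀ c : ℕ, x ∈ {y | -(c : ℝ) ≤ g y} →
      ∃ᶠ n in atTop, T^[n] x ∈ {y | -(c : ℝ) ≤ g y} := ae_all_iff.2 fun c =>
    hT.conservative.ae_mem_imp_frequently_image_mem
      (measurableSet_le measurable_const hg).nullMeasurableSet
  filter_upwards [hrec] with x hx htend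
  obtain ⟨c, hc⟩ := exists_nat_ge (-g x)
  exact hx c (neg_le.2 hc) <| (htend.eventually_lt_atBot (-c)).mono fun n hn => not_le.2 hn

theorem ae_not_tendsto_birkhoffSum_atTop_of_coboundary [IsFiniteMeasure μ]
    (hT : MeasurePreserving T μ μ) {h ψ : X → ℝ} (hψ : Measurable ψ)
    (hcob : h =ᵐ[μ] fun x => ψ x - ψ (T x)) :
    ∀ᵐ x ∂μ, ¬Tendsto (fun n => birkhoffSum T h n x) atTop atTop := by
  have hsums := ae_all_iff.2 fun n => hT.quasiMeasurePreserving.birkhoffSum_ae_eq_of_ae_eq hcob n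
  filter_upwards [hsums, hT.ae_not_tendsto_comp_iterate_atBot hψ] with x hx hrec htend
  refine hrec ((tendsto_atBot_add_const_left _ (ψ x) (tendsto_neg_atTop_atBot.comp htend)).congr
    fun n => ?_)
  simp [hx n, birkhoffSum_sub_comp]

end MeasureTheory.MeasurePreserving

section RunningMinimum

variable {h : X → ℝ}

theorem integrable_max_zero_add_birkhoffSumInf_comp (hT : Measurable T) (hm : Measurable h)
    (hh : Integrable h μ) : Integrable (fun x => max 0 (h x + birkhoffSumInf T h (T x))) μ := by
  refine hh.abs.mono' ((measurable_const.max (hm.add ((hm.birkhoffSumInf hT).comp hT)))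
    |>.aestronglyMeasurable) (ae_of_all _ fun x => ?_)
  rw [Real.norm_eq_abs, abs_of_nonneg (le_max_left _ _)]
  exact max_le (abs_nonneg _)
    ((add_le_of_nonpos_right (birkhoffSumInf_nonpos T h (T x))).trans (le_abs_self _))

theorem ae_eq_max_zero_add_birkhoffSumInf_comp_add_sub
    (hT : Measure.QuasiMeasurePreserving T μ μ)
    (hsum : ∀ᵐ x ∂μ, Tendsto (fun n => birkhoffSum T h n x) atTop atTop) :
    h =ᵐ[μ] fun x => max 0 (h x + birkhoffSumInf T h (T x)) +
      (birkhoffSumInf T h x - birkhoffSumInf T h (T x)) := by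
  filter_upwards [hT.ae hsum] with x hx
  rw [birkhoffSumInf_eq_min_zero_add (bddBelow_range_of_tendsto_atTop_atTop hx)]
  linarith [max_add_min 0 (h x + birkhoffSumInf T h (T x))]

theorem integral_pos_of_measurable_of_ae_tendsto_birkhoffSum_atTop [IsFiniteMeasure μ] [NeZero μ]
    (hT : MeasurePreserving T μ μ) (hm : Measurable h) (hh : Integrable h μ)
    (hsum : ∀ᵐ x ∂μ, Tendsto (fun n => birkhoffSum T h n x) atTop atTop) :
    0 < ∫ x, h x ∂μ := by
  set ψ := birkhoffSumInf T h
  set F := fun x => max 0 (h x + ψ (T x))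
  have hψ : Measurable ψ := hm.birkhoffSumInf hT.measurable
  have hF : Integrable F μ := integrable_max_zero_add_birkhoffSumInf_comp hT.measurable hm hh
  have hdecomp : h =ᵐ[μ] fun x => F x + (ψ x - ψ (T x)) :=
    ae_eq_max_zero_add_birkhoffSumInf_comp_add_sub hT.quasiMeasurePreserving hsum
  have hcob : Integrable (fun x => ψ x - ψ (T x)) μ :=
    (hh.sub hF).congr <| by filter_upwards [hdecomp] with x hx using by simp [hx]
  have hF_nonneg : 0 ≤ F := fun x => le_max_left _ _
  rw [integral_congr_ae hdecomp, integral_add hF hcob, hT.integral_sub_comp_eq_zero hψ hcob,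
    add_zero]
  refine (integral_nonneg hF_nonneg).lt_of_ne fun hzero => ?_
  have hF_zero : F =ᵐ[μ] 0 :=
    (integral_eq_zero_iff_of_nonneg hF_nonneg hF).1 hzero.symm
  have hcoboundary : h =ᵐ[μ] fun x => ψ x - ψ (T x) := by
    filter_upwards [hdecomp, hF_zero] with x hx hx0
    rw [hx, hx0, Pi.zero_apply, zero_add]
  obtain ⟨x, hx, hnot⟩ :=
    (hsum.and (hT.ae_not_tendsto_birkhoffSum_atTop_of_coboundary hψ hcoboundary)).exists
  exact hnot hx

end RunningMinimum

theorem MeasureTheory.MeasurePreserving.integral_pos_of_ae_tendsto_birkhoffSum_atTop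
    [IsFiniteMeasure μ] [NeZero μ] (hT : MeasurePreserving T μ μ) {h : X → ℝ}
    (hh : Integrable h μ)
    (hsum : ∀ᵐ x ∂μ, Tendsto (fun n => birkhoffSum T h n x) atTop atTop) :
    0 < ∫ x, h x ∂μ := by
  have heq := hh.aestronglyMeasurable.ae_eq_mk
  have hsum' : ∀ᵐ x ∂μ, Tendsto (fun n => birkhoffSum T (hh.aestronglyMeasurable.mk h) n x)
      atTop atTop := by
    filter_upwards [hsum, ae_all_iff.2 fun n =>
      hT.quasiMeasurePreserving.birkhoffSum_ae_eq_of_ae_eq heq n] with x hx hxn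
    exact hx.congr hxn
  rw [integral_congr_ae heq]
  exact integral_pos_of_measurable_of_ae_tendsto_birkhoffSum_atTop hT
    hh.aestronglyMeasurable.stronglyMeasurable_mk.measurable (hh.congr heq) hsum'

end

theorem integral_pos_of_ergodic_sums_tendsto_atTop_general
    {X : Type*} [MeasurableSpace X]
    (m : Measure X) [IsProbabilityMeasure m]
    (T : X ≃ᵐ X) (hT : Ergodic (⇑T) m)
    (h : X → ℝ) (hint : Integrable h m)
    (hsum : ∀ᵐ x ∂m,
      Tendsto (fun n : ℕ => ∑ i ∈ Finset.range (n + 1), h ((⇑T)^[i] x)) atTop atTop) :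
    0 < ∫ x, h x ∂m := by
  refine hT.toMeasurePreserving.integral_pos_of_ae_tendsto_birkhoffSum_atTop hint ?_
  filter_upwards [hsum] with x hx
  exact (tendsto_add_atTop_iff_nat 1).1 hx

/-- Let `(X, m, T)` be an invertible ergodic probability-measure-preserving
system and `h ∈ L¹(X, m)` such that for a.e. `x` the ergodic sums
`h(x) + h(Tx) + ⋯ + h(Tⁿx)` tend to `+∞`. Then `∫ h dm > 0`. -/
theorem integral_pos_of_ergodic_sums_tendsto_atTop
    {X : Type*} [MeasurableSpace X] [StandardBorelSpace X]
    (m : Measure X) [IsProbabilityMeasure m]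
    (T : X ≃ᵐ X) (hT : Ergodic (⇑T) m)
    (h : X → ℝ) (hint : Integrable h m)
    (hsum : ∀ᵐ x ∂m,
      Tendsto (fun n : ℕ => ∑ i ∈ Finset.range (n + 1), h ((⇑T)^[i] x)) atTop atTop) :
    0 < ∫ x, h x ∂m :=
  integral_pos_of_ergodic_sums_tendsto_atTop_general m T hT h hint hsum
end
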